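/- Suppose f ∈ ω^ω, and y ≪ z are positive-valued functions on ω, and ⟨x_n : n ∈ ω⟩ is a sequence of positive-valued functions with x_n ≪ x_{n+1} ≪ y ≪ z for all n. Suppose for each n, x_n* is positive-valued with x_n* ≪ x_n ≪ x*_{n+1}, and ⟨x_{n,j} : n,j ∈ ω⟩ are positive-valued with x_n ≪ x_{n,j} ≪ x_{n,j+1} ≪ x_{n+1}* for all j. Suppose ⟨T_{n,j} : n,j ∈ ω⟩ is such that each T_{n,j} is an x_{n,j}-sized tree. Then there exist trees ⟨T^n : n ∈ ω⟩ and T* such that T* is a z-sized tree, f ∈ [T^0], T^0 ⊆ T*, and for every n: (i) T^n ⊆ T^{n+1} and T^n is an x_n-sized tree; (ii) for every j and every g ∈ [T_{n,j}], there is k ∈ ω such that for every η ∈ ω^{<ω} extending g↾k, if η ∈ T_{n,j} and η↾k ∈ T^n ∩ T*, then η ∈ T^{n+1} ∩ T*. -/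
import Mathlib


open Filter

/-- The initial segment of `f` of length `n`, as a finite sequence. -/
def seg (f : ℕ → ℕ) (n : ℕ) : List ℕ := (List.range n).map f

/-- A tree on `ω`: a downward-closed set of finite sequences (with the
convention `η↾m = η.take m = η` when `m ≥ length η`). -/
def IsTree (T : Set (List ℕ)) : Prop := ∀ η ∈ T, ∀ m, η.take m ∈ T

/-- `T` is `x`-sized: the `n`-th level of `T` is finite of size at most `x n`. -/
def Sized (x : ℕ → ℕ) (T : Set (List ℕ)) : Prop :=
  ∀ n, {η ∈ T | η.length = n}.Finite ∧ Set.ncard {η ∈ T | η.length = n} ≤ x n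

/-- `f` is an infinite branch of `T` (i.e. `f ∈ [T]`). -/
def Branch (T : Set (List ℕ)) (f : ℕ → ℕ) : Prop := ∀ n, seg f n ∈ T

/-- `x ≪ y`: pointwise `x n ≤ y n` and `y n / x n → ∞`. -/
def LL (x y : ℕ → ℕ) : Prop :=
  (∀ n, x n ≤ y n) ∧ Tendsto (fun n => (y n : ℝ) / (x n : ℝ)) atTop atTop

lemma seg_length (f : ℕ → ℕ) (n : ℕ) : (seg f n).length = n := by simp [seg]

lemma seg_take (f : ℕ → ℕ) (n m : ℕ) : (seg f n).take m = seg f (min m n) := by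
  simp [seg, ← List.map_take, List.take_range]

/-- The "extra" set added at stage `n`, level-selection `j`. -/
def SAux (T : ℕ → ℕ → Set (List ℕ)) (K : ℕ → ℕ → ℕ) (P : Set (List ℕ)) (n j : ℕ) :
    Set (List ℕ) :=
  {η | η ∈ T n j ∧ K n j ≤ η.length ∧ η.take (K n j) ∈ P}

/-- The recursive construction of the trees `Tⁿ`. -/
def TnAux (f : ℕ → ℕ) (T : ℕ → ℕ → Set (List ℕ)) (K : ℕ → ℕ → ℕ) : ℕ → Set (List ℕ)
  | 0 => Set.range (seg f)
  | n + 1 => TnAux f T K n ∪ ⋃ j, SAux T K (TnAux f T K n) n j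

lemma TnAux_zero (f : ℕ → ℕ) (T : ℕ → ℕ → Set (List ℕ)) (K : ℕ → ℕ → ℕ) :
    TnAux f T K 0 = Set.range (seg f) := rfl

lemma TnAux_succ (f : ℕ → ℕ) (T : ℕ → ℕ → Set (List ℕ)) (K : ℕ → ℕ → ℕ) (n : ℕ) :
    TnAux f T K (n + 1) = TnAux f T K n ∪ ⋃ j, SAux T K (TnAux f T K n) n j := rfl

lemma ncard_finset_biUnion_le {α ι : Type*} (s : Finset ι) (A : ι → Set α) :
    (⋃ i ∈ s, A i).ncard ≤ ∑ i ∈ s, (A i).ncard := by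
  classical
  induction s using Finset.induction with
  | empty => simp
  | @insert a s ha ih =>
    rw [Finset.set_biUnion_insert, Finset.sum_insert ha]
    exact le_trans (Set.ncard_union_le _ _) (by gcongr)

lemma TnAux_tree (f : ℕ → ℕ) (T : ℕ → ℕ → Set (List ℕ)) (K : ℕ → ℕ → ℕ)
    (hT : ∀ n j, IsTree (T n j)) : ∀ n, IsTree (TnAux f T K n) := by
  intro n
  induction n with
  | zero =>
    rw [TnAux_zero]
    rintro η ⟨m, rfl⟩ p
    exact ⟨min p m, (seg_take f m p).symm⟩
  | succ n ih =>
    rw [TnAux_succ]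
    rintro η (h | h) p
    · exact Or.inl (ih η h p)
    · simp only [Set.mem_iUnion] at h
      obtain ⟨j, hj, hl, ht⟩ := h
      by_cases hp : K n j ≤ p
      · refine Or.inr (Set.mem_iUnion.2 ⟨j, hT n j η hj p, ?_, ?_⟩)
        · by_cases hpl : p ≤ η.length
          · rw [List.length_take]; omega
          · rw [List.take_of_length_le (by omega)]; omega
        · rw [List.take_take, min_eq_left hp]; exact ht
      · left
        have : η.take p = (η.take (K n j)).take p := by
          rw [List.take_take, min_eq_left (by omega)]
        rw [this]
        exact ih _ ht p

theorem stmt9 (f : ℕ → ℕ) (y z : ℕ → ℕ) (hy : ∀ t, 0 < y t) (hz : ∀ t, 0 < z t)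
    (hyz : LL y z)
    (x : ℕ → ℕ → ℕ) (hx : ∀ n t, 0 < x n t)
    (hxx : ∀ n, LL (x n) (x (n + 1))) (hxy : ∀ n, LL (x n) y)
    (xs : ℕ → ℕ → ℕ) (hxs : ∀ n t, 0 < xs n t)
    (hxsx : ∀ n, LL (xs n) (x n)) (hxxs : ∀ n, LL (x n) (xs (n + 1)))
    (xnj : ℕ → ℕ → ℕ → ℕ) (hxnj : ∀ n j t, 0 < xnj n j t)
    (hxl : ∀ n j, LL (x n) (xnj n j)) (hxm : ∀ n j, LL (xnj n j) (xnj n (j + 1)))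
    (hxr : ∀ n j, LL (xnj n j) (xs (n + 1)))
    (T : ℕ → ℕ → Set (List ℕ)) (hT : ∀ n j, IsTree (T n j))
    (hTs : ∀ n j, Sized (xnj n j) (T n j)) :
    ∃ (Tn : ℕ → Set (List ℕ)) (Tstar : Set (List ℕ)),
      IsTree Tstar ∧ Sized z Tstar ∧ Branch (Tn 0) f ∧ Tn 0 ⊆ Tstar ∧
      ∀ n, (Tn n ⊆ Tn (n + 1) ∧ IsTree (Tn n) ∧ Sized (x n) (Tn n)) ∧
        ∀ j, ∀ g : ℕ → ℕ, Branch (T n j) g →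
          ∃ k, ∀ η : List ℕ, seg g k <+: η → η ∈ T n j →
            η.take k ∈ Tn n ∩ Tstar → η ∈ Tn (n + 1) ∩ Tstar := by
  -- Step 1: choose the thresholds K n j
  have hKex : ∀ n j : ℕ, ∃ k : ℕ, n + j ≤ k ∧ ∀ t, k ≤ t →
      2 ^ (j + 2) * xnj n j t ≤ x (n + 1) t ∧
      2 ^ (n + j + 3) * xnj n j t ≤ z t ∧
      2 * x n t ≤ x (n + 1) t := by
    intro n j
    obtain ⟨a, ha⟩ := eventually_atTop.mp
      ((hxr n j).2.eventually_ge_atTop ((2 : ℝ) ^ (j + 2)))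
    obtain ⟨b, hb⟩ := eventually_atTop.mp
      (hyz.2.eventually_ge_atTop ((2 : ℝ) ^ (n + j + 3)))
    obtain ⟨c, hc⟩ := eventually_atTop.mp ((hxx n).2.eventually_ge_atTop (2 : ℝ))
    refine ⟨max (max a b) (max c (n + j)), by omega, fun t ht => ?_⟩
    have hta : a ≤ t := by omega
    have htb : b ≤ t := by omega
    have htc : c ≤ t := by omega
    have hpos1 : (0 : ℝ) < (xnj n j t : ℝ) := by exact_mod_cast hxnj n j t
    have hpos2 : (0 : ℝ) < (y t : ℝ) := by exact_mod_cast hy t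
    have hpos3 : (0 : ℝ) < (x n t : ℝ) := by exact_mod_cast hx n t
    refine ⟨?_, ?_, ?_⟩
    · have h1 := (le_div_iff₀ hpos1).mp (ha t hta)
      have h2 : xs (n + 1) t ≤ x (n + 1) t := (hxsx (n + 1)).1 t
      have : (2 : ℝ) ^ (j + 2) * (xnj n j t : ℝ) ≤ (x (n + 1) t : ℝ) :=
        h1.trans (by exact_mod_cast h2)
      exact_mod_cast this
    · have h1 := (le_div_iff₀ hpos2).mp (hb t htb)
      have h2 : xnj n j t ≤ y t :=
        le_trans ((hxr n j).1 t) (le_trans ((hxsx (n + 1)).1 t) ((hxy (n + 1)).1 t))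
      have : (2 : ℝ) ^ (n + j + 3) * (xnj n j t : ℝ) ≤ (z t : ℝ) := by
        calc (2 : ℝ) ^ (n + j + 3) * (xnj n j t : ℝ)
            ≤ (2 : ℝ) ^ (n + j + 3) * (y t : ℝ) :=
              mul_le_mul_of_nonneg_left (by exact_mod_cast h2) (by positivity)
          _ ≤ (z t : ℝ) := h1
      exact_mod_cast this
    · have h1 := (le_div_iff₀ hpos3).mp (hc t htc)
      exact_mod_cast h1
  choose K hK0 hK using hKex
  set Tn : ℕ → Set (List ℕ) := TnAux f T K with hTn
  set Tstar : Set (List ℕ) := ⋃ n, Tn n with hTstar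
  have htree : ∀ n, IsTree (Tn n) := TnAux_tree f T K hT
  have hmono : ∀ n, Tn n ⊆ Tn (n + 1) := fun n => by
    rw [hTn, TnAux_succ]; exact Set.subset_union_left
  -- the level sets of the extra pieces
  have hSsub : ∀ n j, SAux T K (Tn n) n j ⊆ T n j := fun n j η h => h.1
  have hSlevel : ∀ n j t, t < K n j → {η ∈ SAux T K (Tn n) n j | η.length = t} = ∅ := by
    intro n j t ht
    ext η
    simp only [Set.mem_setOf_eq, Set.mem_empty_iff_false, iff_false]
    rintro ⟨⟨_, hl, _⟩, hlen⟩
    omega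
  have hSfin : ∀ n j t, {η ∈ SAux T K (Tn n) n j | η.length = t}.Finite := by
    intro n j t
    exact ((hTs n j t).1).subset (fun η h => ⟨hSsub n j h.1, h.2⟩)
  have hScard : ∀ n j t, ({η ∈ SAux T K (Tn n) n j | η.length = t}).ncard ≤ xnj n j t := by
    intro n j t
    refine le_trans (Set.ncard_le_ncard ?_ (hTs n j t).1) ((hTs n j t).2)
    rintro η ⟨h1, h2⟩
    exact ⟨hSsub n j h1, h2⟩
  -- level-0 levels are singletons
  have hTn0 : Tn 0 = Set.range (seg f) := by rw [hTn, TnAux_zero]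
  have hlev0 : ∀ t, {η ∈ Tn 0 | η.length = t} = {seg f t} := by
    intro t
    rw [hTn0]
    ext η
    simp only [Set.mem_setOf_eq, Set.mem_singleton_iff]
    constructor
    · rintro ⟨⟨m, rfl⟩, hlen⟩
      rw [seg_length] at hlen; rw [hlen]
    · rintro rfl
      exact ⟨⟨t, rfl⟩, seg_length f t⟩
  -- sizing of Tn n
  have hsized : ∀ n, Sized (x n) (Tn n) := by
    intro n
    induction n with
    | zero =>
      intro t
      rw [hlev0 t]
      refine ⟨Set.finite_singleton _, ?_⟩
      rw [Set.ncard_singleton]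
      exact hx 0 t
    | succ n ih =>
      intro t
      have hsub : {η ∈ Tn (n + 1) | η.length = t} ⊆
          {η ∈ Tn n | η.length = t} ∪
            ⋃ j ∈ Finset.range (t + 1), {η ∈ SAux T K (Tn n) n j | η.length = t} := by
        rintro η ⟨hmem, hlen⟩
        rw [hTn, TnAux_succ, ← hTn] at hmem
        rcases hmem with h | h
        · exact Or.inl ⟨h, hlen⟩
        · simp only [Set.mem_iUnion] at h
          obtain ⟨j, hj⟩ := h
          refine Or.inr ?_
          have h1 := hj.2.1
          have h2 := hK0 n j
          simp only [Set.mem_iUnion, Finset.mem_range]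
          exact ⟨j, by omega, hj, hlen⟩
      have hfinU : (⋃ j ∈ Finset.range (t + 1),
          {η ∈ SAux T K (Tn n) n j | η.length = t}).Finite :=
        Set.Finite.biUnion (Finset.range (t + 1)).finite_toSet (fun j _ => hSfin n j t)
      have hfin : {η ∈ Tn (n + 1) | η.length = t}.Finite :=
        (((ih t).1).union hfinU).subset hsub
      refine ⟨hfin, ?_⟩
      have hcount : {η ∈ Tn (n + 1) | η.length = t}.ncard ≤
          x n t + ∑ j ∈ Finset.range (t + 1),
            ({η ∈ SAux T K (Tn n) n j | η.length = t}).ncard := by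
        calc {η ∈ Tn (n + 1) | η.length = t}.ncard
            ≤ ({η ∈ Tn n | η.length = t} ∪ ⋃ j ∈ Finset.range (t + 1),
              {η ∈ SAux T K (Tn n) n j | η.length = t}).ncard :=
              Set.ncard_le_ncard hsub (((ih t).1).union hfinU)
          _ ≤ {η ∈ Tn n | η.length = t}.ncard + (⋃ j ∈ Finset.range (t + 1),
              {η ∈ SAux T K (Tn n) n j | η.length = t}).ncard := Set.ncard_union_le _ _
          _ ≤ x n t + ∑ j ∈ Finset.range (t + 1),
              ({η ∈ SAux T K (Tn n) n j | η.length = t}).ncard := by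
              gcongr
              · exact (ih t).2
              · exact ncard_finset_biUnion_le _ _
      by_cases hc : ∃ j, K n j ≤ t
      · obtain ⟨j0, hj0⟩ := hc
        have hC : 2 * x n t ≤ x (n + 1) t := (hK n j0 t hj0).2.2
        -- real-number estimate
        have hreal : (({η ∈ Tn (n + 1) | η.length = t}).ncard : ℝ) ≤ (x (n + 1) t : ℝ) := by
          have hsum : (∑ j ∈ Finset.range (t + 1),
              ({η ∈ SAux T K (Tn n) n j | η.length = t}).ncard : ℝ) ≤
              (x (n + 1) t : ℝ) / 2 := by
            push_cast
            have hterm : ∀ j ∈ Finset.range (t + 1),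
                (({η ∈ SAux T K (Tn n) n j | η.length = t}).ncard : ℝ) ≤
                  (x (n + 1) t : ℝ) * (1 / 2) ^ (j + 2) := by
              intro j _
              by_cases hKj : K n j ≤ t
              · have h1 := (hK n j t hKj).1
                have h2 := hScard n j t
                have : (({η ∈ SAux T K (Tn n) n j | η.length = t}).ncard : ℝ) ≤
                    (xnj n j t : ℝ) := by exact_mod_cast h2
                refine this.trans ?_
                have h3 : (2 : ℝ) ^ (j + 2) * (xnj n j t : ℝ) ≤ (x (n + 1) t : ℝ) := by
                  exact_mod_cast h1
                rw [div_pow, one_pow, mul_div_assoc']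
                rw [le_div_iff₀ (by positivity), mul_comm]
                linarith [h3]
              · rw [hSlevel n j t (by omega)]
                simp
            calc (∑ j ∈ Finset.range (t + 1),
                (({η ∈ SAux T K (Tn n) n j | η.length = t}).ncard : ℝ))
                ≤ ∑ j ∈ Finset.range (t + 1), (x (n + 1) t : ℝ) * (1 / 2) ^ (j + 2) :=
                  Finset.sum_le_sum hterm
              _ = (x (n + 1) t : ℝ) * (1 / 2) ^ 2 *
                  ∑ j ∈ Finset.range (t + 1), (1 / 2) ^ j := by
                  rw [Finset.mul_sum]
                  refine Finset.sum_congr rfl fun j _ => by ring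
              _ ≤ (x (n + 1) t : ℝ) * (1 / 2) ^ 2 * 2 :=
                  mul_le_mul_of_nonneg_left (sum_geometric_two_le (t + 1)) (by positivity)
              _ = (x (n + 1) t : ℝ) / 2 := by ring
          have hx2 : (x n t : ℝ) ≤ (x (n + 1) t : ℝ) / 2 := by
            rw [le_div_iff₀ (by norm_num)]
            exact_mod_cast by linarith [hC]
          have := hcount
          have hcast : (({η ∈ Tn (n + 1) | η.length = t}).ncard : ℝ) ≤
              (x n t : ℝ) + (∑ j ∈ Finset.range (t + 1),
                ({η ∈ SAux T K (Tn n) n j | η.length = t}).ncard : ℝ) := by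
            exact_mod_cast this
          linarith
        exact_mod_cast hreal
      · push_neg at hc
        have hzero : ∀ j ∈ Finset.range (t + 1),
            ({η ∈ SAux T K (Tn n) n j | η.length = t}).ncard = 0 := by
          intro j _
          rw [hSlevel n j t (hc j)]
          simp
        rw [Finset.sum_eq_zero hzero] at hcount
        calc {η ∈ Tn (n + 1) | η.length = t}.ncard ≤ x n t + 0 := hcount
          _ ≤ x (n + 1) t := by have := (hxx n).1 t; omega
  -- Tstar decomposition
  have hTstar_sub : ∀ n, Tn n ⊆ Set.range (seg f) ∪ ⋃ m, ⋃ j, SAux T K (Tn m) m j := by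
    intro n
    induction n with
    | zero =>
      rw [hTn, TnAux_zero]
      exact Set.subset_union_left
    | succ n ih =>
      rw [hTn, TnAux_succ, ← hTn]
      rintro η (h | h)
      · exact ih h
      · simp only [Set.mem_iUnion] at h
        obtain ⟨j, hj⟩ := h
        refine Or.inr ?_
        simp only [Set.mem_iUnion]
        exact ⟨n, j, hj⟩
  -- Tstar tree
  have htreestar : IsTree Tstar := by
    rintro η hη m
    rw [hTstar] at hη ⊢
    simp only [Set.mem_iUnion] at hη ⊢
    obtain ⟨n, hn⟩ := hη
    exact ⟨n, htree n η hn m⟩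
  -- Tstar sizing
  have hsizedstar : Sized z Tstar := by
    intro t
    have hsub : {η ∈ Tstar | η.length = t} ⊆
        {seg f t} ∪ ⋃ p ∈ Finset.range (t + 1) ×ˢ Finset.range (t + 1),
          {η ∈ SAux T K (Tn p.1) p.1 p.2 | η.length = t} := by
      rintro η ⟨hmem, hlen⟩
      rw [hTstar] at hmem
      simp only [Set.mem_iUnion] at hmem
      obtain ⟨n, hn⟩ := hmem
      rcases hTstar_sub n hn with h | h
      · obtain ⟨m, rfl⟩ := h
        rw [seg_length] at hlen
        exact Or.inl (by rw [hlen]; rfl)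
      · simp only [Set.mem_iUnion] at h
        obtain ⟨m, j, hj⟩ := h
        refine Or.inr ?_
        have h1 := hj.2.1
        have h2 := hK0 m j
        simp only [Set.mem_iUnion, Finset.mem_product, Finset.mem_range]
        exact ⟨(m, j), by omega, hj, hlen⟩
    have hfinU : (⋃ p ∈ Finset.range (t + 1) ×ˢ Finset.range (t + 1),
        {η ∈ SAux T K (Tn p.1) p.1 p.2 | η.length = t}).Finite :=
      Set.Finite.biUnion (Finset.range (t + 1) ×ˢ Finset.range (t + 1)).finite_toSet
        (fun p _ => hSfin p.1 p.2 t)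
    have hfin : {η ∈ Tstar | η.length = t}.Finite :=
      ((Set.finite_singleton _).union hfinU).subset hsub
    refine ⟨hfin, ?_⟩
    have hcount : {η ∈ Tstar | η.length = t}.ncard ≤
        1 + ∑ p ∈ Finset.range (t + 1) ×ˢ Finset.range (t + 1),
          ({η ∈ SAux T K (Tn p.1) p.1 p.2 | η.length = t}).ncard := by
      calc {η ∈ Tstar | η.length = t}.ncard
          ≤ ({seg f t} ∪ ⋃ p ∈ Finset.range (t + 1) ×ˢ Finset.range (t + 1),
            {η ∈ SAux T K (Tn p.1) p.1 p.2 | η.length = t}).ncard :=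
            Set.ncard_le_ncard hsub ((Set.finite_singleton _).union hfinU)
        _ ≤ ({seg f t} : Set (List ℕ)).ncard + (⋃ p ∈ Finset.range (t + 1) ×ˢ
            Finset.range (t + 1), {η ∈ SAux T K (Tn p.1) p.1 p.2 | η.length = t}).ncard :=
            Set.ncard_union_le _ _
        _ ≤ 1 + ∑ p ∈ Finset.range (t + 1) ×ˢ Finset.range (t + 1),
            ({η ∈ SAux T K (Tn p.1) p.1 p.2 | η.length = t}).ncard := by
            rw [Set.ncard_singleton]
            gcongr
            exact ncard_finset_biUnion_le _ _
    by_cases hc : ∃ m j : ℕ, K m j ≤ t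
    · obtain ⟨m0, j0, hm0⟩ := hc
      have h8 : 8 ≤ z t := by
        have h1 := (hK m0 j0 t hm0).2.1
        have h2 := hxnj m0 j0 t
        have : 2 ^ (m0 + j0 + 3) * 1 ≤ z t := by
          calc 2 ^ (m0 + j0 + 3) * 1 ≤ 2 ^ (m0 + j0 + 3) * xnj m0 j0 t := by
                exact Nat.mul_le_mul_left _ h2
            _ ≤ z t := h1
        have : (8 : ℕ) ≤ 2 ^ (m0 + j0 + 3) * 1 := by
          have : (2 : ℕ) ^ 3 ≤ 2 ^ (m0 + j0 + 3) := Nat.pow_le_pow_right (by norm_num) (by omega)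
          omega
        omega
      have hreal : (({η ∈ Tstar | η.length = t}).ncard : ℝ) ≤ (z t : ℝ) := by
        have hterm : ∀ p ∈ Finset.range (t + 1) ×ˢ Finset.range (t + 1),
            (({η ∈ SAux T K (Tn p.1) p.1 p.2 | η.length = t}).ncard : ℝ) ≤
              (z t : ℝ) * (1 / 2) ^ (p.1 + p.2 + 3) := by
          rintro ⟨m, j⟩ _
          by_cases hKj : K m j ≤ t
          · have h1 := (hK m j t hKj).2.1
            have h2 := hScard m j t
            have hle : (({η ∈ SAux T K (Tn m) m j | η.length = t}).ncard : ℝ) ≤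
                (xnj m j t : ℝ) := by exact_mod_cast h2
            refine hle.trans ?_
            have h3 : (2 : ℝ) ^ (m + j + 3) * (xnj m j t : ℝ) ≤ (z t : ℝ) := by
              exact_mod_cast h1
            rw [div_pow, one_pow, mul_div_assoc', le_div_iff₀ (by positivity), mul_comm]
            linarith [h3]
          · rw [hSlevel m j t (by omega)]
            simp
        have hsum : (∑ p ∈ Finset.range (t + 1) ×ˢ Finset.range (t + 1),
            ({η ∈ SAux T K (Tn p.1) p.1 p.2 | η.length = t}).ncard : ℝ) ≤
            (z t : ℝ) / 2 := by
          push_cast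
          calc (∑ p ∈ Finset.range (t + 1) ×ˢ Finset.range (t + 1),
              (({η ∈ SAux T K (Tn p.1) p.1 p.2 | η.length = t}).ncard : ℝ))
              ≤ ∑ p ∈ Finset.range (t + 1) ×ˢ Finset.range (t + 1),
                (z t : ℝ) * (1 / 2) ^ (p.1 + p.2 + 3) := Finset.sum_le_sum hterm
            _ = (z t : ℝ) * (1 / 2) ^ 3 *
                ((∑ m ∈ Finset.range (t + 1), (1 / 2) ^ m) *
                  (∑ j ∈ Finset.range (t + 1), (1 / 2) ^ j)) := by
                rw [Finset.sum_mul_sum, Finset.sum_product, Finset.mul_sum]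
                refine Finset.sum_congr rfl fun m _ => ?_
                rw [Finset.mul_sum]
                refine Finset.sum_congr rfl fun j _ => by ring
            _ ≤ (z t : ℝ) * (1 / 2) ^ 3 * (2 * 2) := by
                have h1 := sum_geometric_two_le (t + 1)
                have hnn : (0 : ℝ) ≤ ∑ m ∈ Finset.range (t + 1), ((1 : ℝ) / 2) ^ m :=
                  Finset.sum_nonneg fun i _ => by positivity
                exact mul_le_mul_of_nonneg_left
                  (mul_le_mul h1 h1 hnn (by norm_num)) (by positivity)
            _ = (z t : ℝ) / 2 := by ring
        have h1 : (1 : ℝ) ≤ (z t : ℝ) / 2 := by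
          rw [le_div_iff₀ (by norm_num)]
          have : (8 : ℝ) ≤ (z t : ℝ) := by exact_mod_cast h8
          linarith
        have hcast : (({η ∈ Tstar | η.length = t}).ncard : ℝ) ≤
            1 + (∑ p ∈ Finset.range (t + 1) ×ˢ Finset.range (t + 1),
              ({η ∈ SAux T K (Tn p.1) p.1 p.2 | η.length = t}).ncard : ℝ) := by
          exact_mod_cast hcount
        linarith
      exact_mod_cast hreal
    · push_neg at hc
      have hzero : ∀ p ∈ Finset.range (t + 1) ×ˢ Finset.range (t + 1),
          ({η ∈ SAux T K (Tn p.1) p.1 p.2 | η.length = t}).ncard = 0 := by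
        rintro ⟨m, j⟩ _
        rw [hSlevel m j t (hc m j)]
        simp
      rw [Finset.sum_eq_zero hzero] at hcount
      have := hz t
      omega
  refine ⟨Tn, Tstar, htreestar, hsizedstar, ?_, ?_, ?_⟩
  · intro n
    rw [hTn0]
    exact ⟨n, rfl⟩
  · rw [hTstar]
    exact Set.subset_iUnion Tn 0
  · intro n
    refine ⟨⟨hmono n, htree n, hsized n⟩, ?_⟩
    intro j g hg
    refine ⟨K n j, fun η hpre hη htake => ?_⟩
    have hlen : (seg g (K n j)).length = K n j := seg_length g (K n j)
    have hlenle : K n j ≤ η.length := by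
      have := hpre.length_le
      omega
    have htakeeq : η.take (K n j) = seg g (K n j) := by
      have := List.prefix_iff_eq_take.mp hpre
      rw [hlen] at this
      exact this.symm
    have hmem : η ∈ SAux T K (Tn n) n j := by
      refine ⟨hη, hlenle, ?_⟩
      rw [htakeeq] at htake ⊢
      exact htake.1
    have hmem1 : η ∈ Tn (n + 1) := by
      rw [hTn, TnAux_succ, ← hTn]
      exact Or.inr (Set.mem_iUnion.2 ⟨j, hmem⟩)
    refine ⟨hmem1, ?_⟩
    rw [hTstar]
    exact Set.mem_iUnion.2 ⟨n + 1, hmem1⟩
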